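/- arXiv:1603.06833 — 3 statements merged into one kernel-verified Lean document; each statement's English description precedes it below -/
import Mathlib

section
/- For a holomorphic function f on an open set V ⊆ ℂⁿ and a smooth compactly supported (n,n)-form ψ on V, the limit lim_{ε→0⁺} ∫_{{|f|² > ε}} ψ / f exists, provided that for every compact set the function |f|^{2s} ∫ admits analytic continuation; in the one-variable monomial case n = 1, f(z) = z^k with k ≥ 1, the limit lim_{ε→0⁺} ∫_{{|z|² > ε}} φ̃(z)/z^k dz ∧ d\bar{z} exists for every smooth compactly supported function φ̃ : ℂ → ℂ. -/
open MeasureTheory Complex Filter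

section PVAux
open intervalIntegral Real Set

lemma pv_fourier_int (m : ℤ) (hm : m ≠ 0) :
    ∫ θ in (-π)..π, Complex.exp ((m:ℂ) * θ * Complex.I) = 0 := by
  have h : ∀ θ : ℝ, (m:ℂ) * θ * Complex.I = ((m:ℂ) * Complex.I) * θ := fun θ => by ring
  simp_rw [h]
  rw [integral_exp_mul_complex (mul_ne_zero (by exact_mod_cast hm) Complex.I_ne_zero)]
  have : (m:ℂ) * Complex.I * (π:ℝ) = (m:ℂ) * Complex.I * ((-π:ℝ):ℂ) + (m:ℤ) * (2 * π * Complex.I) := by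
    push_cast; ring
  rw [this, Complex.exp_add, Complex.exp_int_mul_two_pi_mul_I, mul_one, sub_self, zero_div]

lemma pv_cont (a b : ℕ) (m : ℤ) :
    Continuous (fun θ : ℝ => (Real.cos θ : ℂ)^a * (Real.sin θ : ℂ)^b
      * Complex.exp ((m:ℂ) * θ * Complex.I)) := by
  apply Continuous.mul
  apply Continuous.mul
  · exact (Complex.continuous_ofReal.comp Real.continuous_cos).pow a
  · exact (Complex.continuous_ofReal.comp Real.continuous_sin).pow b
  · exact Complex.continuous_exp.comp ((continuous_const.mul Complex.continuous_ofReal).mul continuous_const)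

lemma pv_fourier_aux : ∀ (n a b : ℕ) (m : ℤ), a + b ≤ n → (a:ℤ) + b < |m| →
    ∫ θ in (-π)..π, (Real.cos θ : ℂ)^a * (Real.sin θ : ℂ)^b
      * Complex.exp ((m:ℂ) * θ * Complex.I) = 0 := by
  have hcos : ∀ x : ℝ, (Real.cos x : ℂ) = (Complex.exp (x * Complex.I) + Complex.exp (-(x * Complex.I))) / 2 := by
    intro x
    rw [Complex.ofReal_cos, show -((x:ℂ) * Complex.I) = (-x) * Complex.I by ring,
      Complex.exp_mul_I, Complex.exp_mul_I, Complex.cos_neg, Complex.sin_neg]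
    ring
  have hsin : ∀ x : ℝ, (Real.sin x : ℂ) = (Complex.exp (x * Complex.I) - Complex.exp (-(x * Complex.I))) / (2 * Complex.I) := by
    intro x
    rw [Complex.ofReal_sin, show -((x:ℂ) * Complex.I) = (-x) * Complex.I by ring,
      Complex.exp_mul_I, Complex.exp_mul_I, Complex.cos_neg, Complex.sin_neg]
    rw [eq_div_iff (by simp [Complex.I_ne_zero] : (2:ℂ) * Complex.I ≠ 0)]
    ring
  have hexp : ∀ (m : ℤ) (θ : ℝ), Complex.exp (((m+1 : ℤ):ℂ) * θ * Complex.I)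
      = Complex.exp ((m:ℂ) * θ * Complex.I) * Complex.exp (θ * Complex.I) := by
    intro m θ; rw [← Complex.exp_add]; push_cast; ring_nf
  have hexp' : ∀ (m : ℤ) (θ : ℝ), Complex.exp (((m-1 : ℤ):ℂ) * θ * Complex.I)
      = Complex.exp ((m:ℂ) * θ * Complex.I) * Complex.exp (-(θ * Complex.I)) := by
    intro m θ; rw [← Complex.exp_add]; push_cast; ring_nf
  intro n
  induction n with
  | zero =>
    intro a b m hab hm
    obtain ⟨rfl, rfl⟩ : a = 0 ∧ b = 0 := by omega
    simpa using pv_fourier_int m (by simpa using (by linarith : (0:ℤ) < |m|).ne')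
  | succ n IH =>
    intro a b m hab hm
    have habs1 : (a:ℤ) + b - 1 < |m + 1| := by
      have := abs_sub_abs_le_abs_sub m (m+1)
      simp at this; linarith
    have habs2 : (a:ℤ) + b - 1 < |m - 1| := by
      have := abs_sub_abs_le_abs_sub m (m-1)
      simp at this; linarith
    rcases a with _ | a
    · rcases b with _ | b
      · simpa using pv_fourier_int m (by simpa using (by linarith : (0:ℤ) < |m|).ne')
      · -- reduce sin power
        have key : ∀ θ : ℝ, (Real.cos θ : ℂ)^0 * (Real.sin θ : ℂ)^(b+1)
              * Complex.exp ((m:ℂ) * θ * Complex.I)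
            = (1/(2*Complex.I)) * ((Real.cos θ : ℂ)^0 * (Real.sin θ : ℂ)^b
                * Complex.exp (((m+1:ℤ):ℂ) * θ * Complex.I))
              - (1/(2*Complex.I)) * ((Real.cos θ : ℂ)^0 * (Real.sin θ : ℂ)^b
                * Complex.exp (((m-1:ℤ):ℂ) * θ * Complex.I)) := by
          intro θ
          rw [hexp, hexp', pow_succ]
          nth_rewrite 2 [hsin θ]
          field_simp [Complex.I_ne_zero]
        rw [intervalIntegral.integral_congr (fun θ _ => key θ)]
        rw [intervalIntegral.integral_sub (((pv_cont 0 b (m+1)).intervalIntegrable _ _).const_mul _)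
          (((pv_cont 0 b (m-1)).intervalIntegrable _ _).const_mul _)]
        rw [intervalIntegral.integral_const_mul, intervalIntegral.integral_const_mul,
          IH 0 b (m+1) (by omega) (by push_cast at habs1 ⊢; linarith),
          IH 0 b (m-1) (by omega) (by push_cast at habs2 ⊢; linarith)]
        ring
    · -- reduce cos power
      have key : ∀ θ : ℝ, (Real.cos θ : ℂ)^(a+1) * (Real.sin θ : ℂ)^b
            * Complex.exp ((m:ℂ) * θ * Complex.I)
          = (1/2 : ℂ) * ((Real.cos θ : ℂ)^a * (Real.sin θ : ℂ)^b
              * Complex.exp (((m+1:ℤ):ℂ) * θ * Complex.I))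
            + (1/2 : ℂ) * ((Real.cos θ : ℂ)^a * (Real.sin θ : ℂ)^b
              * Complex.exp (((m-1:ℤ):ℂ) * θ * Complex.I)) := by
        intro θ
        rw [hexp, hexp', pow_succ]
        nth_rewrite 2 [hcos θ]
        field_simp
      rw [intervalIntegral.integral_congr (fun θ _ => key θ)]
      rw [intervalIntegral.integral_add (((pv_cont a b (m+1)).intervalIntegrable _ _).const_mul _)
        (((pv_cont a b (m-1)).intervalIntegrable _ _).const_mul _)]
      rw [intervalIntegral.integral_const_mul, intervalIntegral.integral_const_mul,
        IH a b (m+1) (by omega) (by push_cast at habs1 ⊢; linarith),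
        IH a b (m-1) (by omega) (by push_cast at habs2 ⊢; linarith)]
      ring

lemma pv_fourier (a b : ℕ) (m : ℤ) (h : (a:ℤ) + b < |m|) :
    ∫ θ in (-π)..π, (Real.cos θ : ℂ)^a * (Real.sin θ : ℂ)^b
      * Complex.exp ((m:ℂ) * θ * Complex.I) = 0 :=
  pv_fourier_aux (a+b) a b m le_rfl h

lemma pv_expand (j : ℕ) (W : ContinuousMultilinearMap ℝ (fun _ : Fin j => ℂ) ℂ) (x y : ℝ) :
    W (fun _ => x • (1:ℂ) + y • Complex.I) =
      ∑ s : Finset (Fin j), (x ^ s.card * y ^ (j - s.card)) •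
        W (fun i => if i ∈ s then (1:ℂ) else Complex.I) := by
  classical
  rw [show W (fun _ : Fin j => x • (1:ℂ) + y • Complex.I)
      = W.toMultilinearMap ((fun _ : Fin j => x • (1:ℂ)) + fun _ => y • Complex.I) from rfl,
    MultilinearMap.map_add_univ]
  apply Finset.sum_congr rfl
  intro s _
  have hpw : (s.piecewise (fun _ : Fin j => x • (1:ℂ)) fun _ => y • Complex.I)
      = fun i => (if i ∈ s then x else y) • (if i ∈ s then (1:ℂ) else Complex.I) := by
    funext i; by_cases h : i ∈ s <;> simp [Finset.piecewise, h]
  rw [hpw, W.toMultilinearMap.map_smul_univ]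
  have h1 : (Finset.univ.filter (fun i : Fin j => i ∈ s)) = s := by ext i; simp
  have h2 : (Finset.univ.filter (fun i : Fin j => ¬ i ∈ s)) = sᶜ := by ext i; simp
  rw [Finset.prod_ite, Finset.prod_const, Finset.prod_const, h1, h2, Finset.card_compl,
    Fintype.card_fin]
  rfl

lemma pv_pointwise (j k : ℕ) (W : ContinuousMultilinearMap ℝ (fun _ : Fin j => ℂ) ℂ)
    {r : ℝ} (hr : 0 < r) (θ : ℝ) :
    r • (W (fun _ => Complex.polarCoord.symm (r, θ)) / (Complex.polarCoord.symm (r, θ))^k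
        * (-2*Complex.I))
    = ∑ s : Finset (Fin j), ((r:ℂ)^(j+1) / (r:ℂ)^k
          * W (fun i => if i ∈ s then (1:ℂ) else Complex.I) * (-2*Complex.I))
        * ((Real.cos θ : ℂ)^s.card * (Real.sin θ : ℂ)^(j - s.card)
          * Complex.exp (((-(k:ℤ) : ℤ):ℂ) * θ * Complex.I)) := by
  classical
  have hz : Complex.polarCoord.symm (r, θ) = (r:ℂ) * Complex.exp (θ * Complex.I) := by
    rw [Complex.polarCoord_symm_apply, Complex.exp_mul_I]
    simp [Complex.ofReal_cos, Complex.ofReal_sin]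
  have hW : W (fun _ => (r:ℂ) * Complex.exp ((θ:ℂ)*Complex.I))
      = (r^j : ℝ) • W (fun _ => Complex.exp ((θ:ℂ)*Complex.I)) := by
    have h0 : (fun _ : Fin j => (r:ℂ) * Complex.exp ((θ:ℂ)*Complex.I))
        = fun _ : Fin j => r • Complex.exp ((θ:ℂ)*Complex.I) := by
      funext i; rw [Complex.real_smul]
    rw [h0, show W (fun _ : Fin j => r • Complex.exp ((θ:ℂ)*Complex.I))
        = W.toMultilinearMap (fun i => (fun _ : Fin j => r) i
            • (fun _ : Fin j => Complex.exp ((θ:ℂ)*Complex.I)) i) from rfl,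
      W.toMultilinearMap.map_smul_univ]
    simp
  have hE : Complex.exp ((θ:ℂ)*Complex.I) = Real.cos θ • (1:ℂ) + Real.sin θ • Complex.I := by
    rw [Complex.exp_mul_I]
    simp [Complex.real_smul, Complex.ofReal_cos, Complex.ofReal_sin]
  have hEne : Complex.exp ((θ:ℂ)*Complex.I) ≠ 0 := Complex.exp_ne_zero _
  have hrne : (r:ℂ) ≠ 0 := Complex.ofReal_ne_zero.2 hr.ne'
  have hEk : Complex.exp (((-(k:ℤ) : ℤ):ℂ) * θ * Complex.I)
      = (Complex.exp ((θ:ℂ)*Complex.I)^k)⁻¹ := by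
    rw [← Complex.exp_nat_mul, ← Complex.exp_neg]
    congr 1; push_cast; ring
  rw [hz, hW]
  nth_rewrite 1 [hE]
  rw [pv_expand]
  rw [Finset.smul_sum, Finset.sum_div, Finset.sum_mul, Finset.smul_sum]
  apply Finset.sum_congr rfl
  intro s _
  rw [hEk]
  simp only [Complex.real_smul, Complex.ofReal_pow, Complex.ofReal_mul]
  field_simp
  ring

lemma pv_key (j k : ℕ) (hjk : j < k) (W : ContinuousMultilinearMap ℝ (fun _ : Fin j => ℂ) ℂ)
    {ε : ℝ} (hε : 0 < ε) (hε1 : ε < 1) :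
    ∫ z in {z : ℂ | ε < ‖z‖ ^ 2 ∧ ‖z‖ ^ 2 < 1},
      W (fun _ => z) / z ^ k * (-2 * Complex.I) = 0 := by
  classical
  set f : ℂ → ℂ := fun z => W (fun _ => z) / z ^ k * (-2 * Complex.I) with hf
  set S : Set ℂ := {z : ℂ | ε < ‖z‖ ^ 2 ∧ ‖z‖ ^ 2 < 1} with hS
  have hu : Continuous (fun z : ℂ => ‖z‖ ^ 2) := continuous_norm.pow 2
  have hSmeas : MeasurableSet S :=
    (measurableSet_lt measurable_const hu.measurable).inter
      (measurableSet_lt hu.measurable measurable_const)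
  have hsqε : 0 < Real.sqrt ε := Real.sqrt_pos.2 hε
  -- continuity of f away from 0
  have hfc : ContinuousOn f {z : ℂ | z ≠ 0} := by
    apply ContinuousOn.mul _ continuousOn_const
    exact ContinuousOn.div
      ((W.cont.comp (continuous_pi fun _ => continuous_id)).continuousOn)
      ((continuous_pow k).continuousOn) (fun z hz => pow_ne_zero _ hz)
  have hsymmc : Continuous (fun p : ℝ × ℝ => Complex.polarCoord.symm p) := by
    simp only [Complex.polarCoord_symm_apply]
    fun_prop
  rw [← MeasureTheory.integral_indicator hSmeas, ← Complex.integral_comp_polarCoord_symm]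
  set Q : Set (ℝ × ℝ) := Set.Ioo (Real.sqrt ε) 1 ×ˢ Set.Ioo (-π) π with hQ
  set G : ℝ × ℝ → ℂ := fun p => p.1 • f (Complex.polarCoord.symm p) with hG
  have step1 : ∫ p in polarCoord.target, p.1 • S.indicator f (Complex.polarCoord.symm p)
      = ∫ p in polarCoord.target,
          (Set.Ioo (Real.sqrt ε) 1 ×ˢ (Set.univ : Set ℝ)).indicator G p := by
    apply setIntegral_congr_fun polarCoord.open_target.measurableSet
    intro p hp
    dsimp only
    have hp1 : 0 < p.1 := hp.1
    have habs : ‖Complex.polarCoord.symm p‖ = p.1 := by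
      rw [Complex.norm_polarCoord_symm, abs_of_pos hp1]
    have hiff : Complex.polarCoord.symm p ∈ S ↔ p.1 ∈ Set.Ioo (Real.sqrt ε) 1 := by
      simp only [hS, Set.mem_setOf_eq, habs, Set.mem_Ioo]
      constructor
      · rintro ⟨h1, h2⟩
        exact ⟨(Real.sqrt_lt' hp1).2 h1, by nlinarith⟩
      · rintro ⟨h1, h2⟩
        exact ⟨(Real.sqrt_lt' hp1).1 h1, by nlinarith⟩
    by_cases hmem : p.1 ∈ Set.Ioo (Real.sqrt ε) 1
    · rw [Set.indicator_of_mem (hiff.2 hmem), Set.indicator_of_mem (by simp [hmem])]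
    · rw [Set.indicator_of_notMem (fun h => hmem (hiff.1 h)),
        Set.indicator_of_notMem (by simp [hmem]), smul_zero]
  rw [step1, MeasureTheory.integral_indicator ((measurableSet_Ioo).prod MeasurableSet.univ),
    Measure.restrict_restrict ((measurableSet_Ioo).prod MeasurableSet.univ)]
  have hQeq : (Set.Ioo (Real.sqrt ε) 1 ×ˢ (Set.univ : Set ℝ)) ∩ polarCoord.target = Q := by
    rw [polarCoord_target, Set.prod_inter_prod, Set.univ_inter, Set.inter_eq_left.2]
    intro x hx; exact lt_trans hsqε hx.1
  rw [hQeq]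
  -- continuity of G on a compact rectangle
  have hGc : ContinuousOn G (Set.Icc (Real.sqrt ε) 1 ×ˢ Set.Icc (-π) π) := by
    apply ContinuousOn.smul (continuous_fst.continuousOn)
    apply hfc.comp hsymmc.continuousOn
    intro p hp
    dsimp only
    have hp1 : 0 < p.1 := lt_of_lt_of_le hsqε hp.1.1
    simp only [Set.mem_setOf_eq]
    intro h0
    have : ‖Complex.polarCoord.symm p‖ = p.1 := by
      rw [Complex.norm_polarCoord_symm, abs_of_pos hp1]
    rw [h0] at this
    simp at this
    exact hp1.ne' this.symm
  have hGint : IntegrableOn G Q := by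
    apply IntegrableOn.mono_set
      (hGc.integrableOn_compact (isCompact_Icc.prod isCompact_Icc))
    exact Set.prod_mono Set.Ioo_subset_Icc_self Set.Ioo_subset_Icc_self
  rw [Measure.volume_eq_prod] at hGint ⊢
  rw [setIntegral_prod _ hGint]
  rw [setIntegral_congr_fun measurableSet_Ioo
    (g := fun _ => (0:ℂ)) ?_]
  · simp
  intro r hr
  dsimp only
  have hr0 : 0 < r := lt_trans hsqε hr.1
  -- inner integral vanishes
  have : ∫ θ in Set.Ioo (-π) π, G (r, θ) = ∫ θ in (-π)..π, G (r, θ) := by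
    rw [intervalIntegral.integral_of_le (by linarith [Real.pi_pos]),
      integral_Ioc_eq_integral_Ioo]
  rw [this]
  have hcongr : ∀ θ ∈ Set.uIcc (-π) π, G (r, θ)
      = ∑ s : Finset (Fin j), ((r:ℂ)^(j+1) / (r:ℂ)^k
          * W (fun i => if i ∈ s then (1:ℂ) else Complex.I) * (-2*Complex.I))
        * ((Real.cos θ : ℂ)^s.card * (Real.sin θ : ℂ)^(j - s.card)
          * Complex.exp (((-(k:ℤ) : ℤ):ℂ) * θ * Complex.I)) := fun θ _ =>
    pv_pointwise j k W hr0 θ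
  rw [intervalIntegral.integral_congr hcongr]
  rw [intervalIntegral.integral_finset_sum]
  · apply Finset.sum_eq_zero
    intro s _
    rw [intervalIntegral.integral_const_mul]
    have hcard : ((s.card : ℤ) + (j - s.card : ℕ) : ℤ) < |(-(k:ℤ) : ℤ)| := by
      have h1 : s.card ≤ j := by
        simpa using Finset.card_le_card (Finset.subset_univ s)
      rw [abs_neg, Int.abs_natCast]
      omega
    rw [pv_fourier _ _ _ hcard, mul_zero]
  · intro s _
    exact (continuous_const.mul (pv_cont s.card (j - s.card) (-(k:ℤ)))).intervalIntegrable _ _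

lemma pv_chain (φ : ℂ → ℂ) (hφ : ContDiff ℝ (⊤ : ℕ∞) φ) (z : ℂ) :
    ∀ (j : ℕ) (t : ℝ), iteratedDeriv j (fun t : ℝ => φ (t • z)) t
      = iteratedFDeriv ℝ j φ (t • z) (fun _ => z) := by
  intro j
  induction j with
  | zero => intro t; simp
  | succ j IH =>
    intro t
    rw [iteratedDeriv_succ]
    have hD : ∀ t : ℝ, HasDerivAt (fun t : ℝ => iteratedFDeriv ℝ j φ (t • z) (fun _ => z))
        ((fderiv ℝ (iteratedFDeriv ℝ j φ) (t • z) z) (fun _ => z)) t := by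
      intro t
      have h1 : HasDerivAt (fun t : ℝ => t • z) z t := by
        simpa using (hasDerivAt_id t).smul_const z
      have h2 : HasFDerivAt (iteratedFDeriv ℝ j φ)
          (fderiv ℝ (iteratedFDeriv ℝ j φ) (t • z)) (t • z) :=
        (((hφ.iteratedFDeriv_right (m := 1) ((by exact_mod_cast le_top))).differentiable one_ne_zero).differentiableAt).hasFDerivAt
      have h3 := h2.comp_hasDerivAt t h1
      have h4 := (ContinuousMultilinearMap.apply ℝ (fun _ : Fin j => ℂ) ℂ
        (fun _ => z)).hasFDerivAt.comp_hasDerivAt t h3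
      exact h4
    have heq : iteratedDeriv j (fun t : ℝ => φ (t • z))
        = fun t : ℝ => iteratedFDeriv ℝ j φ (t • z) (fun _ => z) := funext IH
    rw [heq, (hD t).deriv, iteratedFDeriv_succ_apply_left]
    rfl

lemma pv_taylor (n : ℕ) (φ : ℂ → ℂ) (hφ : ContDiff ℝ (⊤ : ℕ∞) φ) {M : ℝ}
    (hM : ∀ w, ‖iteratedFDeriv ℝ (n+1) φ w‖ ≤ M) (z : ℂ) :
    ‖φ z - ∑ j ∈ Finset.range (n+1), (((Nat.factorial j : ℝ))⁻¹) • iteratedFDeriv ℝ j φ 0 (fun _ => z)‖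
      ≤ M * ‖z‖^(n+1) := by
  set g : ℝ → ℂ := fun t => φ (t • z) with hgdef
  have hg : ContDiff ℝ (⊤ : ℕ∞) g := hφ.comp (contDiff_id.smul contDiff_const)
  have hidw : ∀ (j : ℕ) (t : ℝ), t ∈ Set.Icc (0:ℝ) 1 →
      iteratedDerivWithin j g (Set.Icc 0 1) t = iteratedDeriv j g t := by
    intro j t ht
    rw [iteratedDerivWithin_eq_iteratedFDerivWithin, iteratedDeriv_eq_iteratedFDeriv]
    congr 1
    have h : HasFTaylorSeriesUpToOn ((⊤:ℕ∞) : WithTop ℕ∞) g (ftaylorSeries ℝ g)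
        (Set.Icc (0:ℝ) 1) :=
      (hasFTaylorSeriesUpToOn_univ_iff.2 (contDiff_iff_ftaylorSeries.1
        (hg.of_le (by simp)))).mono (Set.subset_univ (Set.Icc (0:ℝ) 1))
    exact (h.eq_iteratedFDerivWithin_of_uniqueDiffOn (by exact_mod_cast le_top)
      (uniqueDiffOn_Icc one_pos) ht).symm
  have hM0 : 0 ≤ M := le_trans (norm_nonneg _) (hM 0)
  have hC : ∀ y ∈ Set.Icc (0:ℝ) 1,
      ‖iteratedDerivWithin (n+1) g (Set.Icc 0 1) y‖ ≤ M * ‖z‖^(n+1) := by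
    intro y hy
    rw [hidw _ _ hy, pv_chain φ hφ z (n+1) y]
    calc ‖iteratedFDeriv ℝ (n+1) φ (y • z) (fun _ => z)‖
        ≤ ‖iteratedFDeriv ℝ (n+1) φ (y • z)‖ * ∏ _i : Fin (n+1), ‖z‖ :=
          ContinuousMultilinearMap.le_opNorm _ _
      _ ≤ M * ‖z‖^(n+1) := by
          rw [Finset.prod_const, Finset.card_univ, Fintype.card_fin]
          exact mul_le_mul_of_nonneg_right (hM _) (by positivity)
  have htay := taylor_mean_remainder_bound (zero_le_one)
    ((hg.of_le (by exact_mod_cast le_top)).contDiffOn) (Set.right_mem_Icc.2 zero_le_one) hC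
  have hval : taylorWithinEval g n (Set.Icc 0 1) 0 1
      = ∑ j ∈ Finset.range (n+1), (((Nat.factorial j : ℝ))⁻¹) • iteratedFDeriv ℝ j φ 0 (fun _ => z) := by
    rw [taylor_within_apply]
    apply Finset.sum_congr rfl
    intro j _
    rw [hidw j 0 (Set.left_mem_Icc.2 zero_le_one), pv_chain φ hφ z j 0]
    simp
  have hg1 : g 1 = φ z := by simp [hgdef]
  rw [hg1, hval] at htay
  calc ‖φ z - ∑ j ∈ Finset.range (n+1), (((Nat.factorial j : ℝ))⁻¹) • iteratedFDeriv ℝ j φ 0 (fun _ => z)‖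
      ≤ M * ‖z‖^(n+1) * (1-0)^(n+1) / (Nat.factorial n) := htay
    _ ≤ M * ‖z‖^(n+1) := by
        rw [sub_zero, one_pow, mul_one]
        apply div_le_self (by positivity)
        exact_mod_cast Nat.one_le_iff_ne_zero.2 (Nat.factorial_ne_zero n)

end PVAux

open Real Set in
/-- one-variable monomial case: for k ≥ 1 and φ̃ smooth with compact support
on ℂ, the principal-value limit lim_{ε→0⁺} ∫_{|z|²>ε} φ̃(z)/z^k dz ∧ dz̄ exists.  Here
dz ∧ dz̄ = -2i dx∧dy, so the integral of the form is the Lebesgue integral of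
φ̃(z)/z^k · (-2i). -/
theorem principal_value_limit_exists_monomial (k : ℕ) (hk : 1 ≤ k)
    (φ : ℂ → ℂ) (hφ : ContDiff ℝ (⊤ : ℕ∞) φ) (hsupp : HasCompactSupport φ) :
    ∃ L : ℂ,
      Tendsto (fun ε : ℝ =>
          ∫ z in {z : ℂ | ε < ‖z‖ ^ 2}, φ z / z ^ k * (-2 * Complex.I))
        (nhdsWithin 0 (Set.Ioi 0)) (nhds L) := by
  classical
  obtain ⟨n, rfl⟩ : ∃ n, k = n + 1 := ⟨k - 1, by omega⟩
  set c : ℂ := -2 * Complex.I with hc_def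
  have hc : ‖c‖ = 2 := by
    rw [hc_def, norm_mul, norm_neg, Complex.norm_I, mul_one]
    simp
  set P : ℂ → ℂ := fun z => ∑ j ∈ Finset.range (n+1),
    ((Nat.factorial j : ℝ))⁻¹ • iteratedFDeriv ℝ j φ 0 (fun _ => z) with hP
  obtain ⟨M, hM⟩ : ∃ M, ∀ w, ‖iteratedFDeriv ℝ (n+1) φ w‖ ≤ M :=
    (hφ.continuous_iteratedFDeriv (by exact_mod_cast le_top)).bounded_above_of_compact_support
      (hsupp.iteratedFDeriv _)
  have hM0 : 0 ≤ M := le_trans (norm_nonneg _) (hM 0)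
  have hrem : ∀ z : ℂ, ‖φ z - P z‖ ≤ M * ‖z‖^(n+1) := pv_taylor n φ hφ hM
  obtain ⟨Mφ, hMφ⟩ : ∃ C, ∀ z, ‖φ z‖ ≤ C :=
    hφ.continuous.bounded_above_of_compact_support hsupp
  have hMφ0 : 0 ≤ Mφ := le_trans (norm_nonneg _) (hMφ 0)
  set f : ℂ → ℂ := fun z => φ z / z^(n+1) * c with hf
  set h : ℂ → ℂ := fun z => (φ z - P z) / z^(n+1) * c with hh
  set fP : ℂ → ℂ := fun z => P z / z^(n+1) * c with hfP
  have hu : Continuous (fun z : ℂ => ‖z‖ ^ 2) := continuous_norm.pow 2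
  -- sets
  set S : ℝ → Set ℂ := fun ε => {z : ℂ | ε < ‖z‖ ^ 2 ∧ ‖z‖ ^ 2 < 1} with hSdef
  set Sout : Set ℂ := {z : ℂ | 1 ≤ ‖z‖ ^ 2} with hSout
  set T : ℝ → Set ℂ := fun ε => {z : ℂ | 0 < ‖z‖ ^ 2 ∧ ‖z‖ ^ 2 ≤ ε} with hTdef
  have hSmeas : ∀ ε, MeasurableSet (S ε) := fun ε =>
    (measurableSet_lt measurable_const hu.measurable).inter
      (measurableSet_lt hu.measurable measurable_const)
  have hSoutmeas : MeasurableSet Sout := measurableSet_le measurable_const hu.measurable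
  have hTmeas : ∀ ε, MeasurableSet (T ε) := fun ε =>
    (measurableSet_lt measurable_const hu.measurable).inter
      (measurableSet_le hu.measurable measurable_const)
  -- basic point facts
  have hne : ∀ z : ℂ, 0 < ‖z‖ ^ 2 → z ≠ 0 := by
    intro z hz h0; rw [h0] at hz; simp at hz
  have hnz : ∀ {z : ℂ} {ε : ℝ}, 0 < ε → ε < ‖z‖ ^ 2 → Real.sqrt ε ≤ ‖z‖ := by
    intro z ε hε hz
    have h0 : 0 < ‖z‖ := by
      rcases (norm_nonneg z).lt_or_eq with h | h
      · exact h
      · exfalso; rw [← h] at hz; simp at hz; linarith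
    exact le_of_lt ((Real.sqrt_lt' h0).2 hz)
  have hlt1 : ∀ {z : ℂ}, ‖z‖ ^ 2 < 1 → ‖z‖ ≤ 1 := by
    intro z hz
    nlinarith [norm_nonneg z]
  -- continuity
  have hPc : Continuous P := by
    apply continuous_finset_sum
    intro j _
    exact (((iteratedFDeriv ℝ j φ 0).cont).comp
      (continuous_pi fun _ => continuous_id)).const_smul ((Nat.factorial j : ℝ))⁻¹
  have hnorm : ∀ (x z : ℂ), ‖x / z^(n+1) * c‖ = ‖x‖ / ‖z‖^(n+1) * 2 := by
    intro x z; rw [norm_mul, norm_div, norm_pow, hc]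
  -- integrability helper
  have hIO : ∀ (s : Set ℂ), MeasurableSet s → s ⊆ Metric.ball 0 1 → ∀ (g : ℂ → ℂ),
      ContinuousOn g s → ∀ B : ℝ, (∀ z ∈ s, ‖g z‖ ≤ B) → IntegrableOn g s := by
    intro s hs hsub g hg B hB
    refine ⟨hg.aestronglyMeasurable hs, ?_⟩
    apply HasFiniteIntegral.restrict_of_bounded (C := B)
      (lt_of_le_of_lt (measure_mono hsub) measure_ball_lt_top)
    exact (ae_restrict_iff' hs).2 (Filter.Eventually.of_forall hB)
  have hSsub : ∀ {ε : ℝ}, S ε ⊆ Metric.ball 0 1 := by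
    intro ε z hz
    rw [Metric.mem_ball, dist_zero_right]
    rcases (hlt1 hz.2).lt_or_eq with h | h
    · exact h
    · exfalso; rw [hSdef] at hz; simp only [Set.mem_setOf_eq] at hz
      rw [h] at hz; simp at hz
  have hSne : ∀ {ε : ℝ}, 0 ≤ ε → S ε ⊆ {z : ℂ | z ≠ 0} :=
    fun hε z hz => hne z (lt_of_le_of_lt hε hz.1)
  have hSsub0 : ∀ {ε : ℝ}, 0 ≤ ε → S ε ⊆ S 0 :=
    fun hε z hz => ⟨lt_of_le_of_lt hε hz.1, hz.2⟩
  have hcf : ContinuousOn f {z : ℂ | z ≠ 0} :=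
    (hφ.continuous.continuousOn.div ((continuous_pow (n+1)).continuousOn)
      (fun z hz => pow_ne_zero _ hz)).mul continuousOn_const
  have hch : ContinuousOn h {z : ℂ | z ≠ 0} :=
    ((hφ.continuous.sub hPc).continuousOn.div ((continuous_pow (n+1)).continuousOn)
      (fun z hz => pow_ne_zero _ hz)).mul continuousOn_const
  -- bound for h on S 0
  have hhb : ∀ z ∈ S 0, ‖h z‖ ≤ 2*M := by
    intro z hz
    have hz0 : z ≠ 0 := hne z hz.1
    have hpos : 0 < ‖z‖^(n+1) := pow_pos (norm_pos_iff.2 hz0) _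
    rw [hh]
    dsimp only
    rw [hnorm, div_mul_eq_mul_div, div_le_iff₀ hpos]
    nlinarith [hrem z]
  have hIh0 : IntegrableOn h (S 0) :=
    hIO _ (hSmeas 0) hSsub h (hch.mono (hSne le_rfl)) (2*M) hhb
  have hIhS : ∀ {ε : ℝ}, 0 ≤ ε → IntegrableOn h (S ε) :=
    fun hε => hIh0.mono_set (hSsub0 hε)
  have hIfS : ∀ {ε : ℝ}, 0 < ε → IntegrableOn f (S ε) := by
    intro ε hε
    apply hIO _ (hSmeas ε) hSsub f (hcf.mono (hSne hε.le)) (Mφ / (Real.sqrt ε)^(n+1) * 2)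
    intro z hz
    rw [hf]
    dsimp only
    rw [hnorm]
    gcongr
    · exact hMφ z
    · exact hnz hε hz.1
  have hWb : ∀ (j : ℕ) (z : ℂ), ‖z‖ ≤ 1 →
      ‖iteratedFDeriv ℝ j φ 0 (fun _ : Fin j => z)‖ ≤ ‖iteratedFDeriv ℝ j φ 0‖ := by
    intro j z hz
    calc ‖iteratedFDeriv ℝ j φ 0 (fun _ : Fin j => z)‖
        ≤ ‖iteratedFDeriv ℝ j φ 0‖ * ∏ _i : Fin j, ‖z‖ :=
          ContinuousMultilinearMap.le_opNorm _ _
      _ ≤ ‖iteratedFDeriv ℝ j φ 0‖ * 1 := by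
          rw [Finset.prod_const, Finset.card_univ, Fintype.card_fin]
          exact mul_le_mul_of_nonneg_left (pow_le_one₀ (norm_nonneg z) hz) (norm_nonneg _)
      _ = ‖iteratedFDeriv ℝ j φ 0‖ := mul_one _
  have hIgj : ∀ (j : ℕ) {ε : ℝ}, 0 < ε →
      IntegrableOn (fun z : ℂ => iteratedFDeriv ℝ j φ 0 (fun _ : Fin j => z) / z^(n+1) * c)
        (S ε) := by
    intro j ε hε
    apply hIO _ (hSmeas ε) hSsub _ ?_ (‖iteratedFDeriv ℝ j φ 0‖ / (Real.sqrt ε)^(n+1) * 2)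
    · intro z hz
      rw [hnorm]
      gcongr
      · exact hWb j z (hlt1 hz.2)
      · exact hnz hε hz.1
    · apply ContinuousOn.mono _ (hSne hε.le)
      exact ((((iteratedFDeriv ℝ j φ 0).cont.comp
          (continuous_pi fun _ => continuous_id)).continuousOn.div
        ((continuous_pow (n+1)).continuousOn) (fun z hz => pow_ne_zero _ hz)).mul
        continuousOn_const)
  have hfPsum : ∀ z : ℂ, fP z = ∑ j ∈ Finset.range (n+1),
      ((Nat.factorial j : ℝ))⁻¹ • (iteratedFDeriv ℝ j φ 0 (fun _ : Fin j => z) / z^(n+1) * c) := by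
    intro z
    rw [hfP, hP]
    dsimp only
    simp only [Complex.real_smul, Finset.sum_div, Finset.sum_mul]
    exact Finset.sum_congr rfl (fun j _ => by ring)
  have hIfPS : ∀ {ε : ℝ}, 0 < ε → IntegrableOn fP (S ε) := by
    intro ε hε
    apply IntegrableOn.congr_fun _ (fun z _ => (hfPsum z).symm) (hSmeas ε)
    exact integrable_finset_sum _ (fun j _ => ((hIgj j hε).smul ((Nat.factorial j : ℝ))⁻¹))
  -- the outer piece
  have hφint : Integrable φ := hφ.continuous.integrable_of_hasCompactSupport hsupp
  have hSoutne : Sout ⊆ {z : ℂ | z ≠ 0} := by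
    intro z hz; exact hne z (lt_of_lt_of_le zero_lt_one hz)
  have hIfout : IntegrableOn f Sout := by
    apply Integrable.mono ((hφint.norm.const_mul 2).restrict (s := Sout))
      ((hcf.mono hSoutne).aestronglyMeasurable hSoutmeas)
    apply (ae_restrict_iff' hSoutmeas).2
    apply Filter.Eventually.of_forall
    intro z hz
    simp only [hSout, Set.mem_setOf_eq] at hz
    have h1 : (1:ℝ) ≤ ‖z‖ := by
      nlinarith [norm_nonneg z]
    have h2 : (1:ℝ) ≤ ‖z‖^(n+1) := one_le_pow₀ h1
    rw [hf]
    dsimp only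
    rw [hnorm]
    have : ‖φ z‖ / ‖z‖^(n+1) ≤ ‖φ z‖ := by
      apply div_le_self (norm_nonneg _) h2
    calc ‖φ z‖ / ‖z‖^(n+1) * 2 ≤ ‖φ z‖ * 2 := by linarith
      _ ≤ ‖2 * ‖φ z‖‖ := by rw [Real.norm_eq_abs, _root_.abs_of_nonneg (by positivity : (0:ℝ) ≤ 2 * ‖φ z‖)]; linarith
  -- splitting the domain
  have hsplit : ∀ {ε : ℝ}, 0 < ε → ε < 1 →
      ∫ z in {z : ℂ | ε < ‖z‖ ^ 2}, f z
        = (∫ z in S ε, f z) + ∫ z in Sout, f z := by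
    intro ε hε hε1
    have hset : {z : ℂ | ε < ‖z‖ ^ 2} = S ε ∪ Sout := by
      ext z
      simp only [hSdef, hSout, Set.mem_setOf_eq, Set.mem_union]
      constructor
      · intro hz
        by_cases h1 : ‖z‖ ^ 2 < 1
        · exact Or.inl ⟨hz, h1⟩
        · exact Or.inr (le_of_not_gt h1)
      · rintro (⟨h1, _⟩ | h1)
        · exact h1
        · linarith
    rw [hset]
    apply setIntegral_union _ hSoutmeas (hIfS hε) hIfout
    rw [Set.disjoint_left]
    intro z hz hz'
    rw [hSdef] at hz
    rw [hSout] at hz'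
    simp only [Set.mem_setOf_eq] at hz hz'
    linarith [hz.2]
  -- on S ε the polynomial part integrates to zero
  have hAeq : ∀ {ε : ℝ}, 0 < ε → ε < 1 → ∫ z in S ε, f z = ∫ z in S ε, h z := by
    intro ε hε hε1
    have hpt : ∀ z ∈ S ε, f z = h z + fP z := by
      intro z _
      rw [hf, hh, hfP]
      dsimp only
      ring
    rw [setIntegral_congr_fun (hSmeas ε) hpt,
      integral_add (hIhS hε.le) (hIfPS hε)]
    have hzero : ∫ z in S ε, fP z = 0 := by
      have hint : ∀ j ∈ Finset.range (n+1), IntegrableOn (fun z : ℂ =>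
          ((Nat.factorial j : ℝ))⁻¹ •
            (iteratedFDeriv ℝ j φ 0 (fun _ : Fin j => z) / z^(n+1) * c)) (S ε) volume := by
        intro j _
        exact (hIgj j hε).smul ((Nat.factorial j : ℝ))⁻¹
      rw [setIntegral_congr_fun (hSmeas ε) (fun z _ => hfPsum z),
        integral_finset_sum _ hint]
      apply Finset.sum_eq_zero
      intro j hj
      rw [MeasureTheory.integral_smul]
      have := pv_key j (n+1) (Finset.mem_range.1 hj) (iteratedFDeriv ℝ j φ 0) hε hε1
      rw [hSdef]
      rw [this, smul_zero]
    rw [hzero, add_zero]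
  -- decomposition of S 0
  have hS0split : ∀ {ε : ℝ}, 0 < ε → ε < 1 →
      ∫ z in S 0, h z = (∫ z in T ε, h z) + ∫ z in S ε, h z := by
    intro ε hε hε1
    have hset : S 0 = T ε ∪ S ε := by
      ext z
      simp only [hSdef, hTdef, Set.mem_setOf_eq, Set.mem_union]
      constructor
      · intro hz
        by_cases h1 : ‖z‖ ^ 2 ≤ ε
        · exact Or.inl ⟨hz.1, h1⟩
        · exact Or.inr ⟨lt_of_not_ge h1, hz.2⟩
      · rintro (⟨h1, h2⟩ | ⟨h1, h2⟩)
        · exact ⟨h1, lt_of_le_of_lt h2 hε1⟩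
        · exact ⟨lt_trans hε h1, h2⟩
    have hTsub : T ε ⊆ S 0 := fun z hz => ⟨hz.1, lt_of_le_of_lt hz.2 hε1⟩
    rw [hset]
    apply setIntegral_union _ (hSmeas ε) (hIh0.mono_set hTsub) (hIhS hε.le)
    rw [Set.disjoint_left]
    intro z hz hz'
    rw [hTdef] at hz; rw [hSdef] at hz'
    simp only [Set.mem_setOf_eq] at hz hz'
    linarith [hz.2, hz'.1]
  -- error bound on T ε
  have herrb : ∀ {ε : ℝ}, 0 < ε → ε < 1 → ‖∫ z in T ε, h z‖ ≤ 2*M*(ε*π) := by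
    intro ε hε hε1
    have hTsub : T ε ⊆ Metric.closedBall 0 (Real.sqrt ε) := by
      intro z hz
      rw [Metric.mem_closedBall, dist_zero_right]
      have := Real.sqrt_le_sqrt hz.2
      rwa [Real.sqrt_sq (norm_nonneg z)] at this
    have hvol : volume (T ε) ≤ volume (Metric.closedBall (0:ℂ) (Real.sqrt ε)) :=
      measure_mono hTsub
    have hvolball : (volume (Metric.closedBall (0:ℂ) (Real.sqrt ε))).toReal = ε * π := by
      rw [Complex.volume_closedBall]
      simp [ENNReal.toReal_mul, ENNReal.toReal_pow,
        ENNReal.toReal_ofReal (Real.sqrt_nonneg ε), Real.sq_sqrt hε.le]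
    have hTfin : volume (T ε) < ⊤ :=
      lt_of_le_of_lt hvol (isCompact_closedBall _ _).measure_lt_top
    have h1 : ‖∫ z in T ε, h z‖ ≤ (2*M) * (volume (T ε)).toReal := by
      apply norm_setIntegral_le_of_norm_le_const_ae' hTfin
      apply Filter.Eventually.of_forall
      intro z hz
      exact hhb z ⟨hz.1, lt_of_le_of_lt hz.2 hε1⟩
    have h2 : (volume (T ε)).toReal ≤ ε * π := by
      rw [← hvolball]
      exact ENNReal.toReal_mono (isCompact_closedBall _ _).measure_lt_top.ne hvol
    calc ‖∫ z in T ε, h z‖ ≤ (2*M) * (volume (T ε)).toReal := h1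
      _ ≤ 2*M*(ε*π) := mul_le_mul_of_nonneg_left h2 (by linarith)
  -- limit of the error term
  have herr : Tendsto (fun ε : ℝ => ∫ z in T ε, h z) (nhdsWithin 0 (Set.Ioi 0)) (nhds 0) := by
    apply squeeze_zero_norm' (a := fun ε : ℝ => 2*M*(ε*π))
    · filter_upwards [Ioo_mem_nhdsGT_of_mem (Set.left_mem_Ico.2 zero_lt_one)] with ε hε
      exact herrb hε.1 hε.2
    · have hcont : Continuous (fun ε : ℝ => 2*M*(ε*π)) := by fun_prop
      have := (hcont.tendsto 0).mono_left (nhdsWithin_le_nhds (s := Set.Ioi (0:ℝ)))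
      simpa using this
  -- final assembly
  refine ⟨(∫ z in S 0, h z) + ∫ z in Sout, f z, ?_⟩
  have heq : ∀ᶠ ε in nhdsWithin (0:ℝ) (Set.Ioi 0),
      ((∫ z in S 0, h z) + ∫ z in Sout, f z) - (∫ z in T ε, h z)
        = ∫ z in {z : ℂ | ε < ‖z‖ ^ 2}, f z := by
    filter_upwards [Ioo_mem_nhdsGT_of_mem (Set.left_mem_Ico.2 zero_lt_one)] with ε hε
    rw [hsplit hε.1 hε.2, hAeq hε.1 hε.2, hS0split hε.1 hε.2]
    ring
  have hfin := (tendsto_const_nhds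
    (x := (∫ z in S 0, h z) + ∫ z in Sout, f z)
    (f := nhdsWithin (0:ℝ) (Set.Ioi 0))).sub herr
  rw [sub_zero] at hfin
  exact hfin.congr' heq
end

section
/- Let k ≥ 1 be an integer and φ = φ̃(z) dz a smooth compactly supported (1,0)-form on ℂ. Then lim_{ε→0⁺} ∫_{{|z|² = ε}} φ̃(z)/z^k dz = (2πi/(k-1)!) ∂^{k-1}φ̃/∂z^{k-1}(0), where the circle {|z|² = ε} is oriented counterclockwise and ∂/∂z = (1/2)(∂/∂x - i ∂/∂y). -/
open MeasureTheory Complex Filter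

/-- The Wirtinger derivative ∂f/∂z = (1/2)(∂f/∂x - i ∂f/∂y) of a (not necessarily
holomorphic) function f : ℂ → ℂ. -/
noncomputable def wirtinger (f : ℂ → ℂ) (z : ℂ) : ℂ :=
  (1 / 2) * (fderiv ℝ f z 1 - Complex.I * fderiv ℝ f z Complex.I)

noncomputable def wbar (f : ℂ → ℂ) (z : ℂ) : ℂ :=
  (1 / 2) * (fderiv ℝ f z 1 + Complex.I * fderiv ℝ f z Complex.I)

lemma contDiff_wirtinger {f : ℂ → ℂ} (hf : ContDiff ℝ (⊤ : ℕ∞) f) : ContDiff ℝ (⊤ : ℕ∞) (wirtinger f) := by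
  have h : ContDiff ℝ (⊤ : ℕ∞) (fderiv ℝ f) := hf.fderiv_right (by simp)
  exact contDiff_const.mul ((h.clm_apply contDiff_const).sub
    (contDiff_const.mul (h.clm_apply contDiff_const)))

lemma contDiff_wbar {f : ℂ → ℂ} (hf : ContDiff ℝ (⊤ : ℕ∞) f) : ContDiff ℝ (⊤ : ℕ∞) (wbar f) := by
  have h : ContDiff ℝ (⊤ : ℕ∞) (fderiv ℝ f) := hf.fderiv_right (by simp)
  exact contDiff_const.mul ((h.clm_apply contDiff_const).add
    (contDiff_const.mul (h.clm_apply contDiff_const)))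

lemma hcs_wirtinger {f : ℂ → ℂ} (hs : HasCompactSupport f) :
    HasCompactSupport (wirtinger f) := by
  have h := hs.fderiv (𝕜 := ℝ)
  have : wirtinger f = (fun L : ℂ →L[ℝ] ℂ => (1/2) * (L 1 - Complex.I * L Complex.I)) ∘ (fderiv ℝ f) := rfl
  rw [this]
  exact h.comp_left (by simp)

lemma hcs_wbar {f : ℂ → ℂ} (hs : HasCompactSupport f) :
    HasCompactSupport (wbar f) := by
  have h := hs.fderiv (𝕜 := ℝ)
  have : wbar f = (fun L : ℂ →L[ℝ] ℂ => (1/2) * (L 1 + Complex.I * L Complex.I)) ∘ (fderiv ℝ f) := rfl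
  rw [this]
  exact h.comp_left (by simp)

lemma fderiv_decomp (f : ℂ → ℂ) (z v : ℂ) :
    fderiv ℝ f z v = wirtinger f z * v + wbar f z * (starRingEnd ℂ) v := by
  have hv : v = v.re • (1:ℂ) + v.im • Complex.I := by
    simp [Complex.real_smul, Complex.re_add_im]
  rw [hv, map_add, (fderiv ℝ f z).map_smul, (fderiv ℝ f z).map_smul]
  simp only [wirtinger, wbar, map_add, map_mul, Complex.conj_I, Complex.conj_ofReal, map_one,
    Complex.real_smul, smul_eq_mul]
  ring_nf
  rw [Complex.I_sq]
  ring

noncomputable def circInt (f : ℂ → ℂ) (m : ℤ) (r : ℝ) : ℂ :=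
  ∫ θ in (0:ℝ)..(2 * Real.pi),
    f ((r:ℂ) * Complex.exp (θ * Complex.I)) * Complex.exp (-(m:ℂ) * θ * Complex.I)

lemma integral_exp_neg_int (m : ℤ) :
    (∫ θ in (0:ℝ)..(2 * Real.pi), Complex.exp (-(m:ℂ) * θ * Complex.I))
      = if m = 0 then (2 * Real.pi : ℂ) else 0 := by
  rcases eq_or_ne m 0 with h | h
  · simp [h]
  · have hc : (-(m:ℂ) * Complex.I) ≠ 0 := by
      simp [Complex.ext_iff, h]
    have : ∀ θ : ℝ, (-(m:ℂ) * θ * Complex.I) = (-(m:ℂ) * Complex.I) * (θ:ℂ) := by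
      intro θ; ring
    simp only [this]
    rw [integral_exp_mul_complex hc]
    have h1 : Complex.exp (-(m:ℂ) * Complex.I * (2 * Real.pi : ℝ)) = 1 := by
      have := Complex.exp_int_mul_two_pi_mul_I (-m)
      convert this using 2
      push_cast
      ring
    have h2 : Complex.exp (-(m:ℂ) * Complex.I * (0:ℝ)) = 1 := by simp
    rw [h1, h2]
    simp [h]

lemma circInt_zero (f : ℂ → ℂ) (m : ℤ) :
    circInt f m 0 = f 0 * (if m = 0 then (2 * Real.pi : ℂ) else 0) := by
  rw [circInt, ← integral_exp_neg_int m, ← intervalIntegral.integral_const_mul]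
  congr 1; ext θ; simp

lemma norm_exp_theta (θ : ℝ) : ‖Complex.exp ((θ:ℂ) * Complex.I)‖ = 1 := by
  simp [Complex.norm_exp]

lemma norm_exp_m (m : ℤ) (θ : ℝ) : ‖Complex.exp (-(m:ℂ) * θ * Complex.I)‖ = 1 := by
  simp [Complex.norm_exp, mul_assoc]

lemma continuous_circ (r : ℝ) : Continuous fun θ : ℝ => (r:ℂ) * Complex.exp (θ * Complex.I) := by
  fun_prop

lemma continuous_em (m : ℤ) : Continuous fun θ : ℝ => Complex.exp (-(m:ℂ) * θ * Complex.I) := by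
  fun_prop

lemma hasDerivAt_circInt (f : ℂ → ℂ) (hf : ContDiff ℝ (⊤ : ℕ∞) f) (hs : HasCompactSupport f)
    (m : ℤ) (r : ℝ) :
    HasDerivAt (circInt f m)
      (circInt (wirtinger f) (m-1) r + circInt (wbar f) (m+1) r) r := by
  obtain ⟨C, hC⟩ := (hs.fderiv (𝕜 := ℝ)).exists_bound_of_continuous (hf.continuous_fderiv (by simp))
  set F : ℝ → ℝ → ℂ := fun x θ =>
    f ((x:ℂ) * Complex.exp (θ * Complex.I)) * Complex.exp (-(m:ℂ) * θ * Complex.I) with hF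
  set F' : ℝ → ℝ → ℂ := fun x θ =>
    fderiv ℝ f ((x:ℂ) * Complex.exp (θ * Complex.I)) (Complex.exp (θ * Complex.I))
      * Complex.exp (-(m:ℂ) * θ * Complex.I) with hF'
  have hdiff : ∀ (x θ : ℝ), HasDerivAt (fun y => F y θ) (F' x θ) x := by
    intro x θ
    have h1 : HasDerivAt (fun y : ℝ => (y:ℂ) * Complex.exp (θ * Complex.I))
        (Complex.exp (θ * Complex.I)) x := by
      simpa using (Complex.ofRealCLM.hasDerivAt (x := x)).mul_const (Complex.exp (θ * Complex.I))
    have h2 := (hf.differentiable (by simp) (↑x * Complex.exp (θ * Complex.I))).hasFDerivAt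
    exact (h2.comp_hasDerivAt x h1).mul_const _
  have hF'cont : ∀ x : ℝ, Continuous (F' x) := by
    intro x
    exact (((hf.continuous_fderiv (by simp)).comp (continuous_circ x)).clm_apply
      (by fun_prop)).mul (continuous_em m)
  have hFcont : ∀ x : ℝ, Continuous (F x) := fun x =>
    ((hf.continuous.comp (continuous_circ x)).mul (continuous_em m))
  have key := intervalIntegral.hasDerivAt_integral_of_dominated_loc_of_deriv_le
      (F := F) (F' := F') (x₀ := r) (a := 0) (b := 2*Real.pi) (bound := fun _ => C)
      (μ := MeasureTheory.volume) Filter.univ_mem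
      (Filter.Eventually.of_forall fun x => (hFcont x).aestronglyMeasurable)
      ((hFcont r).intervalIntegrable 0 (2*Real.pi))
      ((hF'cont r).aestronglyMeasurable)
      (Filter.Eventually.of_forall fun θ => fun _ => fun x _ => by
        have h1 := (fderiv ℝ f ((x:ℂ) * Complex.exp (θ * Complex.I))).le_opNorm
          (Complex.exp (θ * Complex.I))
        calc ‖F' x θ‖ = ‖fderiv ℝ f ((x:ℂ) * Complex.exp (θ * Complex.I))
              (Complex.exp (θ * Complex.I))‖ := by
              rw [hF', norm_mul, norm_exp_m, mul_one]
          _ ≤ ‖fderiv ℝ f ((x:ℂ) * Complex.exp (θ * Complex.I))‖ := by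
              simpa [norm_exp_theta] using h1
          _ ≤ C := hC _)
      (intervalIntegrable_const)
      (Filter.Eventually.of_forall fun θ => fun _ => fun x _ => hdiff x θ)
  have h2 := key.2
  have hrw : ∀ θ : ℝ, F' r θ =
      wirtinger f ((r:ℂ) * Complex.exp (θ * Complex.I))
          * Complex.exp (-((m-1 : ℤ):ℂ) * θ * Complex.I)
        + wbar f ((r:ℂ) * Complex.exp (θ * Complex.I))
          * Complex.exp (-((m+1 : ℤ):ℂ) * θ * Complex.I) := by
    intro θ
    have hconj : (starRingEnd ℂ) (Complex.exp (θ * Complex.I)) = Complex.exp (-(θ * Complex.I)) := by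
      rw [← Complex.exp_conj]
      congr 1
      simp [Complex.conj_I]
    have e1 : (θ:ℂ) * Complex.I + -(m:ℂ) * ((θ:ℂ) * Complex.I)
        = -((m-1 : ℤ):ℂ) * ((θ:ℂ) * Complex.I) := by push_cast; ring
    have e2 : -((θ:ℂ) * Complex.I) + -(m:ℂ) * ((θ:ℂ) * Complex.I)
        = -((m+1 : ℤ):ℂ) * ((θ:ℂ) * Complex.I) := by push_cast; ring
    rw [hF']
    simp only [fderiv_decomp f, hconj, add_mul, mul_assoc, ← Complex.exp_add, e1, e2]
  have hint1 : IntervalIntegrable (fun θ : ℝ => wirtinger f ((r:ℂ) * Complex.exp (θ * Complex.I))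
      * Complex.exp (-((m-1 : ℤ):ℂ) * θ * Complex.I)) MeasureTheory.volume 0 (2*Real.pi) :=
    (((contDiff_wirtinger hf).continuous.comp (continuous_circ r)).mul
      (continuous_em (m-1))).intervalIntegrable 0 (2*Real.pi)
  have hint2 : IntervalIntegrable (fun θ : ℝ => wbar f ((r:ℂ) * Complex.exp (θ * Complex.I))
      * Complex.exp (-((m+1 : ℤ):ℂ) * θ * Complex.I)) MeasureTheory.volume 0 (2*Real.pi) :=
    (((contDiff_wbar hf).continuous.comp (continuous_circ r)).mul
      (continuous_em (m+1))).intervalIntegrable 0 (2*Real.pi)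
  have : (∫ θ in (0:ℝ)..(2*Real.pi), F' r θ)
      = circInt (wirtinger f) (m-1) r + circInt (wbar f) (m+1) r := by
    rw [intervalIntegral.integral_congr (fun θ _ => hrw θ),
      intervalIntegral.integral_add hint1 hint2]
    rfl
  rw [this] at h2
  exact h2

lemma continuous_circInt (f : ℂ → ℂ) (hf : ContDiff ℝ (⊤ : ℕ∞) f) (hs : HasCompactSupport f) (m : ℤ) :
    Continuous (circInt f m) :=
  continuous_iff_continuousAt.2 fun r => (hasDerivAt_circInt f hf hs m r).continuousAt

lemma tendsto_circInt_zero (f : ℂ → ℂ) (hf : ContDiff ℝ (⊤ : ℕ∞) f) (hs : HasCompactSupport f) (m : ℤ) :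
    Tendsto (circInt f m) (nhdsWithin 0 (Set.Ioi 0))
      (nhds (f 0 * (if m = 0 then (2*Real.pi:ℂ) else 0))) := by
  have h1 : Tendsto (circInt f m) (nhds 0) (nhds (circInt f m 0)) :=
    (continuous_circInt f hf hs m).tendsto 0
  rw [circInt_zero] at h1
  exact h1.mono_left nhdsWithin_le_nhds

lemma tendsto_div_pow_of_hasDerivAt {F F' : ℝ → ℂ} {m : ℕ} (hm : 1 ≤ m)
    (hF : ∀ r, HasDerivAt F (F' r) r) (hF'c : Continuous F') (hF0 : F 0 = 0) {c : ℂ}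
    (h : Tendsto (fun r : ℝ => F' r / (r:ℂ)^(m-1)) (nhdsWithin 0 (Set.Ioi 0))
      (nhds ((m:ℂ) * c))) :
    Tendsto (fun r : ℝ => F r / (r:ℂ)^m) (nhdsWithin 0 (Set.Ioi 0)) (nhds c) := by
  have hmR : (0:ℝ) < m := by exact_mod_cast hm
  rw [Metric.tendsto_nhdsWithin_nhds] at h ⊢
  intro ε hε
  obtain ⟨δ, hδ, hδ'⟩ := h (ε * m / 2) (by positivity)
  refine ⟨δ, hδ, ?_⟩
  intro r hr hrd
  have hr0 : (0:ℝ) < r := hr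
  have hrC : ((r:ℂ))^m ≠ 0 := pow_ne_zero _ (by exact_mod_cast hr0.ne')
  -- pointwise bound on (0, r]
  have hbound : ∀ s ∈ Set.Ioc (0:ℝ) r,
      ‖F' s - (m:ℂ) * c * (s:ℂ)^(m-1)‖ ≤ ε * m / 2 * s^(m-1) := by
    intro s hs
    have hs0 : 0 < s := hs.1
    have hsC : ((s:ℂ))^(m-1) ≠ 0 := pow_ne_zero _ (by exact_mod_cast hs0.ne')
    have hsd : dist s 0 < δ := by
      rw [Real.dist_eq, sub_zero, abs_of_pos hs0]
      rw [Real.dist_eq, sub_zero, abs_of_pos hr0] at hrd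
      linarith [hs.2]
    have hlt := hδ' hs.1 hsd
    rw [dist_eq_norm] at hlt
    have heq : F' s / (s:ℂ)^(m-1) - (m:ℂ)*c
        = (F' s - (m:ℂ)*c*(s:ℂ)^(m-1)) / (s:ℂ)^(m-1) := by
      field_simp
    rw [heq, norm_div] at hlt
    have hnorm : ‖((s:ℂ))^(m-1)‖ = s^(m-1) := by
      rw [norm_pow, Complex.norm_real, Real.norm_of_nonneg hs0.le]
    rw [hnorm, div_lt_iff₀ (pow_pos hs0 _)] at hlt
    linarith [hlt]
  -- FTC
  have hG : ∀ s : ℝ, HasDerivAt (fun t : ℝ => F t - c * (t:ℂ)^m)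
      (F' s - (m:ℂ) * c * (s:ℂ)^(m-1)) s := by
    intro s
    have h1 : HasDerivAt (fun t : ℝ => ((t:ℂ))^m) ((m:ℂ) * (s:ℂ)^(m-1)) s := by
      exact (hasDerivAt_pow m ((s:ℂ))).comp_ofReal
    have : HasDerivAt (fun t : ℝ => F t - c * (t:ℂ)^m) (F' s - c * ((m:ℂ) * (s:ℂ)^(m-1))) s :=
      (hF s).sub (h1.const_mul c)
    convert this using 1
    ring
  have hcont : Continuous (fun s : ℝ => F' s - (m:ℂ) * c * (s:ℂ)^(m-1)) := by
    fun_prop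
  have hFTC : (∫ s in (0:ℝ)..r, (F' s - (m:ℂ)*c*(s:ℂ)^(m-1))) = F r - c*(r:ℂ)^m := by
    rw [intervalIntegral.integral_eq_sub_of_hasDerivAt (fun s _ => hG s)
      (hcont.intervalIntegrable 0 r)]
    simp [hF0]
    exact Or.inr (by omega)
  have hIoc1 : MeasureTheory.IntegrableOn
      (fun s : ℝ => ‖F' s - (m:ℂ)*c*(s:ℂ)^(m-1)‖) (Set.Ioc 0 r) := by
    exact (hcont.norm.intervalIntegrable 0 r).1
  have hIoc2 : MeasureTheory.IntegrableOn
      (fun s : ℝ => ε * m / 2 * s^(m-1)) (Set.Ioc 0 r) := by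
    exact ((continuous_const.mul (continuous_pow (m-1))).intervalIntegrable 0 r).1
  have hnb : ‖F r - c*(r:ℂ)^m‖ ≤ ε * m / 2 * (r^m / m) := by
    rw [← hFTC]
    calc ‖∫ s in (0:ℝ)..r, (F' s - (m:ℂ)*c*(s:ℂ)^(m-1))‖
        ≤ ∫ s in (0:ℝ)..r, ‖F' s - (m:ℂ)*c*(s:ℂ)^(m-1)‖ :=
          intervalIntegral.norm_integral_le_integral_norm hr0.le
      _ ≤ ∫ s in (0:ℝ)..r, ε * m / 2 * s^(m-1) := by
          rw [intervalIntegral.integral_of_le hr0.le, intervalIntegral.integral_of_le hr0.le]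
          exact MeasureTheory.setIntegral_mono_on hIoc1 hIoc2 measurableSet_Ioc hbound
      _ = ε * m / 2 * (r^m / m) := by
          rw [intervalIntegral.integral_const_mul, integral_pow,
            zero_pow (by omega : m - 1 + 1 ≠ 0)]
          have h9 : ((m-1:ℕ):ℝ) + 1 = m := by exact_mod_cast Nat.sub_add_cancel hm
          rw [h9, Nat.sub_add_cancel hm, sub_zero]
  have hd : dist (F r / (r:ℂ)^m) c = ‖F r - c*(r:ℂ)^m‖ / r^m := by
    rw [dist_eq_norm]
    have : F r / (r:ℂ)^m - c = (F r - c*(r:ℂ)^m) / (r:ℂ)^m := by field_simp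
    rw [this, norm_div, norm_pow, Complex.norm_real, Real.norm_of_nonneg hr0.le]
  rw [hd]
  have hrm : (0:ℝ) < r^m := pow_pos hr0 _
  rw [div_lt_iff₀ hrm]
  calc ‖F r - c*(r:ℂ)^m‖ ≤ ε * m / 2 * (r^m / m) := hnb
    _ = ε / 2 * r^m := by field_simp
    _ < ε * r^m := by nlinarith

lemma aux_tendsto_zero : ∀ j : ℕ, ∀ m : ℤ, (j : ℤ) < m → ∀ f : ℂ → ℂ, ContDiff ℝ (⊤ : ℕ∞) f →
    HasCompactSupport f →
    Tendsto (fun r : ℝ => circInt f m r / (r:ℂ)^j) (nhdsWithin 0 (Set.Ioi 0)) (nhds 0) := by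
  intro j
  induction j with
  | zero =>
    intro m hm f hf hs
    simp only [pow_zero, div_one]
    have h1 := tendsto_circInt_zero f hf hs m
    rw [if_neg (by omega), mul_zero] at h1
    exact h1
  | succ j ih =>
    intro m hm f hf hs
    have hc1 := contDiff_wirtinger hf
    have hc2 := contDiff_wbar hf
    have hs1 := hcs_wirtinger hs
    have hs2 := hcs_wbar hs
    have hF0 : circInt f m 0 = 0 := by rw [circInt_zero, if_neg (by omega), mul_zero]
    refine tendsto_div_pow_of_hasDerivAt (m := j+1) (by omega)
      (fun r => hasDerivAt_circInt f hf hs m r)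
      ((continuous_circInt _ hc1 hs1 _).add (continuous_circInt _ hc2 hs2 _)) hF0 ?_
    rw [mul_zero]
    have t1 := ih (m-1) (by omega) (wirtinger f) hc1 hs1
    have t2 := ih (m+1) (by omega) (wbar f) hc2 hs2
    have hsum := t1.add t2
    rw [add_zero] at hsum
    simpa [add_div, Nat.add_sub_cancel] using hsum

lemma main_tendsto : ∀ m : ℕ, ∀ f : ℂ → ℂ, ContDiff ℝ (⊤ : ℕ∞) f → HasCompactSupport f →
    Tendsto (fun r : ℝ => circInt f (m : ℤ) r / (r:ℂ)^m) (nhdsWithin 0 (Set.Ioi 0))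
      (nhds ((2 * (Real.pi:ℂ) / (Nat.factorial m : ℂ)) * (wirtinger^[m] f) 0)) := by
  intro m
  induction m with
  | zero =>
    intro f hf hs
    simp only [pow_zero, div_one, Function.iterate_zero, id_eq, Nat.factorial_zero,
      Nat.cast_one, Nat.cast_zero]
    have h1 := tendsto_circInt_zero f hf hs 0
    rw [if_pos rfl] at h1
    convert h1 using 2
    push_cast
    ring
  | succ m ih =>
    intro f hf hs
    have hc1 := contDiff_wirtinger hf
    have hc2 := contDiff_wbar hf
    have hs1 := hcs_wirtinger hs
    have hs2 := hcs_wbar hs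
    have hF0 : circInt f ((m+1:ℕ):ℤ) 0 = 0 := by
      rw [circInt_zero, if_neg (by omega), mul_zero]
    refine tendsto_div_pow_of_hasDerivAt (m := m+1) (by omega)
      (fun r => hasDerivAt_circInt f hf hs ((m+1:ℕ):ℤ) r)
      ((continuous_circInt _ hc1 hs1 _).add (continuous_circInt _ hc2 hs2 _)) hF0 ?_
    have e1 : ((m+1:ℕ):ℤ) - 1 = (m:ℤ) := by push_cast; ring
    have t1 := ih (wirtinger f) hc1 hs1
    have t2 := aux_tendsto_zero m (((m+1:ℕ):ℤ)+1) (by push_cast; omega) (wbar f) hc2 hs2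
    have hsum := t1.add t2
    rw [add_zero] at hsum
    have hfac : ((m+1:ℕ):ℂ) * (2 * (Real.pi:ℂ) / (Nat.factorial (m+1) : ℂ) *
        (wirtinger^[m+1] f) 0)
        = 2 * (Real.pi:ℂ) / (Nat.factorial m : ℂ) * (wirtinger^[m] (wirtinger f)) 0 := by
      rw [Function.iterate_succ_apply, Nat.factorial_succ]
      have hm0 : ((Nat.factorial m : ℂ)) ≠ 0 := by
        exact_mod_cast Nat.cast_ne_zero.mpr (Nat.factorial_ne_zero m)
      have hm1 : ((m:ℂ) + 1) ≠ 0 := by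
        have h5 : ((m+1:ℕ):ℂ) ≠ 0 := Nat.cast_ne_zero.mpr (by omega)
        push_cast at h5
        exact h5
      push_cast
      field_simp
    rw [hfac]
    simpa [add_div, Nat.add_sub_cancel, e1] using hsum

/-- lim_{ε→0⁺} ∫_{|z|²=ε} φ̃(z)/z^k dz = (2πi/(k-1)!) ∂^{k-1}φ̃/∂z^{k-1}(0),
the circle |z| = √ε being parametrized counterclockwise by θ ↦ √ε e^{iθ}. -/
theorem residue_current_dbar_one_over_zk (k : ℕ) (hk : 1 ≤ k)
    (φ : ℂ → ℂ) (hφ : ContDiff ℝ (⊤ : ℕ∞) φ) (hsupp : HasCompactSupport φ) :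
    Tendsto (fun ε : ℝ =>
        ∫ θ in (0 : ℝ)..(2 * Real.pi),
          φ ((Real.sqrt ε : ℂ) * Complex.exp (θ * Complex.I)) /
              ((Real.sqrt ε : ℂ) * Complex.exp (θ * Complex.I)) ^ k *
            (Complex.I * (Real.sqrt ε : ℂ) * Complex.exp (θ * Complex.I)))
      (nhdsWithin 0 (Set.Ioi 0))
      (nhds ((2 * Real.pi * Complex.I / (Nat.factorial (k - 1) : ℂ)) *
        (wirtinger^[k - 1] φ) 0)) := by
  obtain ⟨n, rfl⟩ : ∃ n, k = n + 1 := ⟨k - 1, (Nat.sub_add_cancel hk).symm⟩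
  simp only [Nat.add_sub_cancel]
  have hsqrt : Tendsto Real.sqrt (nhdsWithin 0 (Set.Ioi 0)) (nhdsWithin 0 (Set.Ioi 0)) := by
    apply tendsto_nhdsWithin_of_tendsto_nhds_of_eventually_within
    · have h0 := (Real.continuous_sqrt.tendsto 0).mono_left
        (nhdsWithin_le_nhds (s := Set.Ioi (0:ℝ)))
      simpa using h0
    · filter_upwards [self_mem_nhdsWithin] with x hx
      exact Real.sqrt_pos.mpr hx
  have hmain := (main_tendsto n φ hφ hsupp).comp hsqrt
  have hmul := hmain.const_mul Complex.I
  have hlim : Complex.I * (2 * (Real.pi:ℂ) / (Nat.factorial n : ℂ) * (wirtinger^[n] φ) 0)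
      = 2 * Real.pi * Complex.I / (Nat.factorial n : ℂ) * (wirtinger^[n] φ) 0 := by
    ring
  rw [hlim] at hmul
  refine hmul.congr' ?_
  filter_upwards [self_mem_nhdsWithin] with ε hε
  have hr : 0 < Real.sqrt ε := Real.sqrt_pos.mpr hε
  set r := Real.sqrt ε with hrdef
  have hrC : ((r:ℝ):ℂ) ≠ 0 := by exact_mod_cast hr.ne'
  have hpt : ∀ θ ∈ Set.uIcc (0:ℝ) (2*Real.pi),
      φ ((r:ℂ) * Complex.exp (θ * Complex.I)) /
          ((r:ℂ) * Complex.exp (θ * Complex.I)) ^ (n+1) *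
        (Complex.I * (r:ℂ) * Complex.exp (θ * Complex.I))
      = (Complex.I / (r:ℂ)^n) * (φ ((r:ℂ) * Complex.exp (θ * Complex.I)) *
          Complex.exp (-(((n:ℤ)):ℂ) * θ * Complex.I)) := by
    intro θ _
    have he : Complex.exp ((θ:ℂ) * Complex.I) ≠ 0 := Complex.exp_ne_zero _
    have hek : Complex.exp (-(((n:ℤ)):ℂ) * θ * Complex.I)
        = (Complex.exp ((θ:ℂ) * Complex.I) ^ n)⁻¹ := by
      have h1 : -(((n:ℤ)):ℂ) * θ * Complex.I
          = ((-(n:ℤ) : ℤ):ℂ) * ((θ:ℂ) * Complex.I) := by push_cast; ring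
      rw [h1, Complex.exp_int_mul, zpow_neg, zpow_natCast]
    rw [hek]
    field_simp
    ring
  have hint : (∫ θ in (0:ℝ)..(2 * Real.pi),
        φ ((r:ℂ) * Complex.exp (θ * Complex.I)) /
            ((r:ℂ) * Complex.exp (θ * Complex.I)) ^ (n+1) *
          (Complex.I * (r:ℂ) * Complex.exp (θ * Complex.I)))
      = (Complex.I / (r:ℂ)^n) * circInt φ (n:ℤ) r := by
    rw [intervalIntegral.integral_congr hpt, intervalIntegral.integral_const_mul]
    rfl
  rw [Function.comp_apply] at *
  rw [hint]
  ring
end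

section
/- Let ψ be a smooth closed differential form on U \ L, where U ⊆ ℂⁿ is open and L = {λ = 0} with λ holomorphic on U and dλ nonvanishing on L. Suppose λψ extends smoothly to U (ψ has a first-order polar singularity along L). If ψ = (dλ/λ) ∧ χ₁ + θ₁ = (dλ/λ) ∧ χ₂ + θ₂ with χᵢ, θᵢ smooth forms on U, then the restrictions χ₁|_L and χ₂|_L agree; i.e., the Leray residue form res[ψ] := χ|_L is well-defined. -/
/-!
Subtracting the two decompositions gives `dλ ∧ (χ₁ - χ₂) = λ (θ₂ - θ₁)` off `L`. Both sides are
continuous on `U` (the differential of a holomorphic function is continuous), and near a point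
where `dλ ≠ 0` the zero set of `λ` has empty interior, so the identity persists on `L`, where the
right side vanishes. Evaluating at `(u, w₁, …, w_r)` with the `wᵢ` tangent to `L` and `dλ u ≠ 0`
leaves `dλ u • (χ₁ - χ₂) w = 0`.
-/

open Filter Metric Set Topology

/-- Restrict `f` to the complex lines `s ↦ z + s • x`: these converge locally uniformly as
`z → a`, so their derivatives at `0` do too (Weierstrass). -/
theorem DifferentiableOn.continuousAt_fderiv_apply {E F : Type*} [NormedAddCommGroup E]
    [NormedSpace ℂ E] [NormedAddCommGroup F] [NormedSpace ℂ F] [CompleteSpace F]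
    {f : E → F} {U : Set E} (hf : DifferentiableOn ℂ f U) (hU : IsOpen U) {a : E} (ha : a ∈ U)
    (x : E) : ContinuousAt (fun z => fderiv ℂ f z x) a := by
  set line : E → ℂ → F := fun z s => f (z + s • x)
  obtain ⟨V, hV, W, hW, hVW⟩ : ∃ V ∈ 𝓝 a, ∃ W ∈ 𝓝 (0 : ℂ), V ×ˢ W ⊆ {p | p.1 + p.2 • x ∈ U} :=
    mem_nhds_prod_iff.1 <| (by fun_prop : Continuous fun p : E × ℂ => p.1 + p.2 • x).continuousAt
      (x := (a, 0)) |>.preimage_mem_nhds (by simpa using hU.mem_nhds ha)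
  obtain ⟨ρ, hρ, hρW⟩ := nhds_basis_closedBall.mem_iff.1 hW
  have hcont : ContinuousOn (Function.uncurry line) (V ×ˢ closedBall 0 ρ) :=
    hf.continuousOn.comp (by fun_prop) fun p hp => hVW ⟨hp.1, hρW hp.2⟩
  have hunif : TendstoUniformlyOn line (line a) (𝓝 a) (closedBall 0 ρ) := fun u hu => by
    obtain ⟨N, hN, hNu⟩ := (isCompact_closedBall 0 ρ).mem_uniformity_of_prod hcont
      (mem_of_mem_nhds hV) (symm_le_uniformity hu)
    rw [nhdsWithin_eq_nhds.2 hV] at hN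
    exact Filter.mem_of_superset hN fun z hz s hs => hNu z hz s hs
  have hderiv := (hunif.tendstoLocallyUniformlyOn.mono ball_subset_closedBall).deriv
    (Filter.mem_of_superset hV fun z hz => hf.comp (by fun_prop)
      fun s hs => hVW (mk_mem_prod hz (hρW (ball_subset_closedBall hs)))) isOpen_ball
  have hline : ∀ z ∈ U, _root_.deriv (line z) 0 = fderiv ℂ f z x := fun z hz =>
    ((hf.differentiableAt (hU.mem_nhds hz)).hasFDerivAt.comp_hasDerivAt_of_eq (0 : ℂ)
      (by simpa using ((hasDerivAt_id (0 : ℂ)).smul_const x).const_add z) (by simp)).deriv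
  have hlim := hderiv.tendsto_at (mem_ball_self hρ)
  rw [Function.comp_def, hline a ha] at hlim
  exact hlim.congr' (eventually_of_mem (hU.mem_nhds ha) fun z hz => hline z hz)

theorem mem_closure_setOf_ne_zero_of_fderiv_ne_zero {𝕜 E F : Type*} [NontriviallyNormedField 𝕜]
    [NormedAddCommGroup E] [NormedSpace 𝕜 E] [NormedAddCommGroup F] [NormedSpace 𝕜 F]
    {f : E → F} {a : E} (h : fderiv 𝕜 f a ≠ 0) : a ∈ closure {z | f z ≠ 0} := by
  rw [show {z | f z ≠ 0} = {z | f z = 0}ᶜ from rfl, closure_compl, mem_compl_iff,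
    mem_interior_iff_mem_nhds]
  intro hzero
  exact h <| by simpa using (show f =ᶠ[𝓝 a] fun _ => 0 from hzero).fderiv_eq (𝕜 := 𝕜)

theorem eq_of_continuousAt_of_eq_off_zeros {𝕜 E F G : Type*} [NontriviallyNormedField 𝕜]
    [NormedAddCommGroup E] [NormedSpace 𝕜 E] [NormedAddCommGroup F] [NormedSpace 𝕜 F]
    [TopologicalSpace G] [T2Space G] {lam : E → F} {f g : E → G} {a : E}
    (hlam : fderiv 𝕜 lam a ≠ 0) (hf : ContinuousAt f a) (hg : ContinuousAt g a)
    (hfg : ∀ᶠ z in 𝓝 a, lam z ≠ 0 → f z = g z) : f a = g a := by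
  have : (𝓝[{z | lam z ≠ 0}] a).NeBot :=
    mem_closure_iff_nhdsWithin_neBot.1 <| mem_closure_setOf_ne_zero_of_fderiv_ne_zero hlam
  have hfg' : f =ᶠ[𝓝[{z | lam z ≠ 0}] a] g := eventually_nhdsWithin_iff.2 hfg
  exact tendsto_nhds_unique_of_eventuallyEq (hf.mono_left nhdsWithin_le_nhds)
    (hg.mono_left nhdsWithin_le_nhds) hfg'

section Wedge

variable {R M : Type*} [CommRing R] {r : ℕ}

/-- `α ∧ χ` for a covector `α` and an `r`-form `χ`, forms being given by their values on tuples
of vectors: the decompositions in the theorem read `ψ = wedge (dλ / λ) χᵢ + θᵢ`. -/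
def wedge (α : M → R) (χ : (Fin r → M) → R) (v : Fin (r + 1) → M) : R :=
  ∑ i : Fin (r + 1), (-1 : R) ^ (i : ℕ) * α (v i) * χ (fun j => v (i.succAbove j))

theorem wedge_sub_right (α : M → R) (χ₁ χ₂ : (Fin r → M) → R) (v : Fin (r + 1) → M) :
    wedge α (χ₁ - χ₂) v = wedge α χ₁ v - wedge α χ₂ v := by
  simp only [wedge, Pi.sub_apply, mul_sub, Finset.sum_sub_distrib]

theorem wedge_cons_of_apply_eq_zero {α : M → R} (χ : (Fin r → M) → R) (u : M) {w : Fin r → M}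
    (hw : ∀ i, α (w i) = 0) : wedge α χ (Fin.cons u w) = α u * χ w := by
  rw [wedge, Fin.sum_univ_succ]
  simp [hw]

theorem wedge_div_const {K M : Type*} [Field K] (α : M → K) (c : K) (χ : (Fin r → M) → K)
    (v : Fin (r + 1) → M) : wedge (fun y => α y / c) χ v = wedge α χ v / c := by
  simp only [wedge, Finset.sum_div]
  exact Finset.sum_congr rfl fun i _ => by ring

theorem wedge_sub_eq_mul_of_wedge_div_add_eq {K M : Type*} [Field K] {α : M → K} {c ψ θ₁ θ₂ : K}
    {χ₁ χ₂ : (Fin r → M) → K} {v : Fin (r + 1) → M} (hc : c ≠ 0)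
    (h₁ : ψ = wedge (fun y => α y / c) χ₁ v + θ₁) (h₂ : ψ = wedge (fun y => α y / c) χ₂ v + θ₂) :
    wedge α (χ₁ - χ₂) v = c * (θ₂ - θ₁) := by
  rw [wedge_div_const] at h₁ h₂
  rw [wedge_sub_right]
  field_simp at h₁ h₂
  linear_combination h₂ - h₁

theorem continuousAt_wedge {X : Type*} [TopologicalSpace X] [TopologicalSpace R]
    [IsTopologicalRing R] {α : X → M → R} {χ : X → (Fin r → M) → R} {a : X}
    (hα : ∀ y, ContinuousAt (fun z => α z y) a) (hχ : ∀ w, ContinuousAt (fun z => χ z w) a)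
    (v : Fin (r + 1) → M) : ContinuousAt (fun z => wedge (α z) (χ z) v) a := by
  unfold wedge
  fun_prop

end Wedge

/-- well-definedness of the Leray residue form.  A degree-m form is encoded
by its values on tuples of tangent vectors.  If ψ = (dλ/λ)∧χ₁ + θ₁ = (dλ/λ)∧χ₂ + θ₂ on
U \ L with χᵢ, θᵢ continuous on U, λ holomorphic with dλ ≠ 0 on L = {λ = 0}, then the
restrictions of χ₁ and χ₂ to L (i.e. their values at points of L on tuples of vectors
tangent to L) coincide. -/
theorem leray_residue_well_defined {n r : ℕ} (U : Set (Fin n → ℂ)) (hU : IsOpen U)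
    (lam : (Fin n → ℂ) → ℂ) (hlam : DifferentiableOn ℂ lam U)
    (hgrad : ∀ a ∈ U, lam a = 0 → fderiv ℂ lam a ≠ 0)
    (ψ θ₁ θ₂ : (Fin n → ℂ) → (Fin (r + 1) → (Fin n → ℂ)) → ℂ)
    (χ₁ χ₂ : (Fin n → ℂ) → (Fin r → (Fin n → ℂ)) → ℂ)
    (hχ₁ : ∀ v, ContinuousOn (fun z => χ₁ z v) U)
    (hχ₂ : ∀ v, ContinuousOn (fun z => χ₂ z v) U)
    (hθ₁ : ∀ v, ContinuousOn (fun z => θ₁ z v) U)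
    (hθ₂ : ∀ v, ContinuousOn (fun z => θ₂ z v) U)
    (hdec₁ : ∀ z ∈ U, lam z ≠ 0 → ∀ v : Fin (r + 1) → (Fin n → ℂ),
      ψ z v = (∑ i : Fin (r + 1), (-1 : ℂ) ^ (i : ℕ) * (fderiv ℂ lam z (v i) / lam z) *
        χ₁ z (fun j => v (i.succAbove j))) + θ₁ z v)
    (hdec₂ : ∀ z ∈ U, lam z ≠ 0 → ∀ v : Fin (r + 1) → (Fin n → ℂ),
      ψ z v = (∑ i : Fin (r + 1), (-1 : ℂ) ^ (i : ℕ) * (fderiv ℂ lam z (v i) / lam z) *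
        χ₂ z (fun j => v (i.succAbove j))) + θ₂ z v) :
    ∀ a ∈ U, lam a = 0 → ∀ w : Fin r → (Fin n → ℂ),
      (∀ i, fderiv ℂ lam a (w i) = 0) → χ₁ a w = χ₂ a w := by
  intro a ha h0 w hw
  obtain ⟨u, hu⟩ : ∃ u, fderiv ℂ lam a u ≠ 0 := by simpa using DFunLike.ne_iff.1 (hgrad a ha h0)
  set v : Fin (r + 1) → Fin n → ℂ := Fin.cons u w
  have hUa : U ∈ 𝓝 a := hU.mem_nhds ha
  have hres : wedge (fderiv ℂ lam a) (χ₁ a - χ₂ a) v = lam a * (θ₂ a v - θ₁ a v) := by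
    refine eq_of_continuousAt_of_eq_off_zeros (𝕜 := ℂ) (hgrad a ha h0)
      (f := fun z => wedge (fderiv ℂ lam z) (χ₁ z - χ₂ z) v)
      (g := fun z => lam z * (θ₂ z v - θ₁ z v)) ?_ ?_ ?_
    · exact continuousAt_wedge (hlam.continuousAt_fderiv_apply hU ha)
        (fun w => ((hχ₁ w).continuousAt hUa).sub ((hχ₂ w).continuousAt hUa)) v
    · exact (hlam.continuousOn.continuousAt hUa).mul
        (((hθ₂ v).continuousAt hUa).sub ((hθ₁ v).continuousAt hUa))
    · filter_upwards [hUa] with z hz hlz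
      exact wedge_sub_eq_mul_of_wedge_div_add_eq hlz (hdec₁ z hz hlz v) (hdec₂ z hz hlz v)
  rw [h0, zero_mul, wedge_cons_of_apply_eq_zero _ _ hw, Pi.sub_apply] at hres
  exact sub_eq_zero.1 ((mul_eq_zero.1 hres).resolve_left hu)
end
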